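/- Let e_0 = n^{-1}Σ_{x∈G} x and 1† = 1 − e_0. For any b† ∈ FG with e_0·b† = 0 and b†·(b† bar) = −1†, the code C_{1†,b†} = {(u·1†, u·b†) : u ∈ FG} ≤ (FG)² is a self-orthogonal 2-quasi-FG code with dim_F C_{1†,b†} = n − 1. -/

import Mathlib

open scoped Classical

noncomputable section

/-- The "bar" map on the group algebra: `Σ aₓ x ↦ Σ aₓ x⁻¹`. -/
def bar {F : Type} [Field F] {G : Type} [CommGroup G] (a : MonoidAlgebra F G) :
    MonoidAlgebra F G :=
  MonoidAlgebra.ofCoeff (Finsupp.mapDomain (fun x => x⁻¹) a.coeff)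

/-- The euclidean inner product on the group algebra. -/
def inn {F : Type} [Field F] {G : Type} [CommGroup G] [Fintype G]
    (a b : MonoidAlgebra F G) : F :=
  ∑ x : G, a.coeff x * b.coeff x

/-- The euclidean inner product on `(FG)²`. -/
def inn2 {F : Type} [Field F] {G : Type} [CommGroup G] [Fintype G]
    (u v : MonoidAlgebra F G × MonoidAlgebra F G) : F :=
  inn u.1 v.1 + inn u.2 v.2

/-- The Hamming weight of an element of `(FG)²` (number of nonzero coordinates
among its `2n` coordinates). -/
def wt {F : Type} [Field F] {G : Type} [CommGroup G] [Fintype G]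
    (u : MonoidAlgebra F G × MonoidAlgebra F G) : ℕ :=
  (Finset.univ.filter fun x : G => u.1.coeff x ≠ 0).card +
    (Finset.univ.filter fun x : G => u.2.coeff x ≠ 0).card

/-- The 2-quasi-abelian code generated by `(a,b)`: `C_{a,b} = {(ua, ub) : u ∈ FG}`. -/
def code {F : Type} [Field F] {G : Type} [CommGroup G]
    (a b : MonoidAlgebra F G) :
    Submodule (MonoidAlgebra F G) (MonoidAlgebra F G × MonoidAlgebra F G) :=
  LinearMap.range
    ((LinearMap.mulRight (MonoidAlgebra F G) a).prod
      (LinearMap.mulRight (MonoidAlgebra F G) b))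

/-- The dual (orthogonal complement) of a `2`-quasi-abelian code, as a set. -/
def dualSet {F : Type} [Field F] {G : Type} [CommGroup G] [Fintype G]
    (C : Submodule (MonoidAlgebra F G) (MonoidAlgebra F G × MonoidAlgebra F G)) :
    Set (MonoidAlgebra F G × MonoidAlgebra F G) :=
  {v | ∀ c ∈ C, inn2 v c = 0}

/-- A `2`-quasi-abelian code is self-dual if it equals its orthogonal complement. -/
def IsSelfDualCode {F : Type} [Field F] {G : Type} [CommGroup G] [Fintype G]
    (C : Submodule (MonoidAlgebra F G) (MonoidAlgebra F G × MonoidAlgebra F G)) : Prop :=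
  (C : Set (MonoidAlgebra F G × MonoidAlgebra F G)) = dualSet C

/-- A `2`-quasi-abelian code is self-orthogonal if `⟨u,v⟩ = 0` for all `u, v` in it. -/
def IsSelfOrthCode {F : Type} [Field F] {G : Type} [CommGroup G] [Fintype G]
    (C : Submodule (MonoidAlgebra F G) (MonoidAlgebra F G × MonoidAlgebra F G)) : Prop :=
  ∀ u ∈ C, ∀ v ∈ C, inn2 u v = 0

/-- The minimum Hamming weight of the nonzero elements of a code. -/
def minwt {F : Type} [Field F] {G : Type} [CommGroup G] [Fintype G]
    (C : Submodule (MonoidAlgebra F G) (MonoidAlgebra F G × MonoidAlgebra F G)) : ℕ :=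
  sInf {k | ∃ v ∈ C, v ≠ 0 ∧ wt v = k}

/-- `μ_q(n)`: the minimal size of a nontrivial `q`-cyclotomic coset of `ℤ/nℤ`. -/
def mu (q n : ℕ) : ℕ :=
  sInf {k | ∃ a : ZMod n, a ≠ 0 ∧
    k = Nat.card {b : ZMod n | ∃ j : ℕ, b = a * (q : ZMod n) ^ j}}

/-- The `q`-entropy function. -/
def entropy (q : ℕ) (δ : ℝ) : ℝ :=
  δ * Real.logb q (q - 1) - δ * Real.logb q δ - (1 - δ) * Real.logb q (1 - δ)

/-- A primitive idempotent of a commutative ring. -/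
def IsPrimIdem {A : Type} [CommRing A] (e : A) : Prop :=
  IsIdempotentElem e ∧ e ≠ 0 ∧
    ¬ ∃ e' e'' : A, IsIdempotentElem e' ∧ IsIdempotentElem e'' ∧
      e' ≠ 0 ∧ e'' ≠ 0 ∧ e' * e'' = 0 ∧ e = e' + e''

/-- The principal idempotent `e₀ = n⁻¹ Σ_{x∈G} x`. -/
def eZero (F : Type) [Field F] (G : Type) [CommGroup G] [Fintype G] : MonoidAlgebra F G :=
  ((Fintype.card G : F)⁻¹) • ∑ x : G, MonoidAlgebra.single x (1 : F)

/-- `F`-dimension of an `FG`-submodule of `(FG)²`. -/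
def fdim2 (F : Type) [Field F] {G : Type} [CommGroup G]
    (C : Submodule (MonoidAlgebra F G) (MonoidAlgebra F G × MonoidAlgebra F G)) : ℕ :=
  Module.finrank F (Submodule.restrictScalars F C)

/-- `F`-dimension of an ideal of `FG`. -/
def fdim (F : Type) [Field F] {G : Type} [CommGroup G]
    (A : Ideal (MonoidAlgebra F G)) : ℕ :=
  Module.finrank F (Submodule.restrictScalars F A)

/-!
Write `a₁ = 1 - e₀`. The inner product of `(u a₁, u b)` and `(v a₁, v b)` is the coefficient at
`1` of `u v̄ (a₁ ā₁ + b b̄)`. As `n` is invertible in `F`, `e₀` is a bar-invariant idempotent, so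
`a₁ ā₁ = a₁` and the hypothesis on `b` makes the second factor vanish. Since `e₀ b = 0`, the map
`u ↦ (u a₁, u b)` kills exactly the `u` with `u e₀ = u`, and `u e₀ = (∑ₓ uₓ) e₀`; so its kernel is
the line `F e₀` and the code has dimension `n - 1`.
-/

section Bar

variable {F : Type} [Field F] {G : Type} [CommGroup G]

def barRingEquiv : MonoidAlgebra F G ≃+* MonoidAlgebra F G :=
  MonoidAlgebra.mapDomainRingEquiv F (MulEquiv.inv G)

theorem barRingEquiv_apply (a : MonoidAlgebra F G) : barRingEquiv a = bar a := rfl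

theorem coeff_bar (a : MonoidAlgebra F G) (x : G) : (bar a).coeff x = a.coeff x⁻¹ := by
  simp [← barRingEquiv_apply, barRingEquiv]

theorem bar_mul (a c : MonoidAlgebra F G) : bar (a * c) = bar a * bar c :=
  map_mul barRingEquiv a c

theorem bar_sub (a c : MonoidAlgebra F G) : bar (a - c) = bar a - bar c :=
  map_sub barRingEquiv a c

theorem bar_one : bar (1 : MonoidAlgebra F G) = 1 :=
  map_one barRingEquiv

end Bar

section InnerProduct

variable {F : Type} [Field F] {G : Type} [CommGroup G] [Fintype G]

theorem coeff_mul_eq_sum (a c : MonoidAlgebra F G) (g : G) :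
    (a * c).coeff g = ∑ h, a.coeff h * c.coeff (h⁻¹ * g) := by
  rw [MonoidAlgebra.coeff_mul_apply_left, Finsupp.sum_fintype]
  simp

theorem inn_eq_coeff_mul_bar (a c : MonoidAlgebra F G) : inn a c = (a * bar c).coeff 1 := by
  simp [inn, coeff_mul_eq_sum, coeff_bar]

theorem isSelfOrthCode_code {a b : MonoidAlgebra F G} (h : a * bar a + b * bar b = 0) :
    IsSelfOrthCode (code a b) := by
  rintro _ ⟨u, rfl⟩ _ ⟨v, rfl⟩
  have hfactor :
      u * a * bar (v * a) + u * b * bar (v * b) = u * bar v * (a * bar a + b * bar b) := by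
    rw [bar_mul, bar_mul]; ring
  change inn (u * a) (v * a) + inn (u * b) (v * b) = 0
  rw [inn_eq_coeff_mul_bar, inn_eq_coeff_mul_bar, ← Finsupp.add_apply, ← MonoidAlgebra.coeff_add,
    hfactor, h, mul_zero]
  rfl

end InnerProduct

section PrincipalIdempotent

variable {F : Type} [Field F] {G : Type} [CommGroup G] [Fintype G]

theorem coeff_eZero (x : G) : (eZero F G).coeff x = (Fintype.card G : F)⁻¹ := by
  simp [eZero, MonoidAlgebra.coeff_sum, MonoidAlgebra.coeff_single, Finsupp.single_apply]

theorem mul_eZero (a : MonoidAlgebra F G) : a * eZero F G = (∑ x, a.coeff x) • eZero F G := by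
  ext g
  simp [coeff_mul_eq_sum, coeff_eZero, Finset.sum_mul]

theorem bar_eZero : bar (eZero F G) = eZero F G := by
  ext x
  simp [coeff_bar, coeff_eZero]

theorem eZero_ne_zero (hn : (Fintype.card G : F) ≠ 0) : eZero F G ≠ 0 := fun h ↦
  inv_ne_zero hn (by simpa [h] using (coeff_eZero (F := F) (1 : G)).symm)

theorem isIdempotentElem_eZero (hn : (Fintype.card G : F) ≠ 0) : IsIdempotentElem (eZero F G) := by
  have hsum : ∑ x, (eZero F G).coeff x = 1 := by
    simp [coeff_eZero, hn]
  rw [IsIdempotentElem, mul_eZero, hsum, one_smul]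

theorem mul_eZero_eq_self_iff (hn : (Fintype.card G : F) ≠ 0) (u : MonoidAlgebra F G) :
    u * eZero F G = u ↔ ∃ c : F, c • eZero F G = u := by
  refine ⟨fun h ↦ ⟨_, (mul_eZero u).symm.trans h⟩, ?_⟩
  rintro ⟨c, rfl⟩
  rw [smul_mul_assoc, (isIdempotentElem_eZero hn).eq]

end PrincipalIdempotent

theorem IsIdempotentElem.mul_one_sub_eq_zero_and_mul_eq_zero_iff {R : Type*} [CommRing R]
    {e b : R} (he : IsIdempotentElem e) (hb : e * b = 0) (u : R) :
    u * (1 - e) = 0 ∧ u * b = 0 ↔ u * e = u := by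
  constructor
  · rintro ⟨h, -⟩
    rwa [mul_sub, mul_one, sub_eq_zero, eq_comm] at h
  · intro h
    rw [← h, mul_assoc, mul_assoc, hb, mul_sub, mul_one, he.eq]
    simp

theorem natCast_ne_zero_of_coprime_card {F : Type} [Field F] [Fintype F] {n : ℕ}
    (h : n.Coprime (Fintype.card F)) : (n : F) ≠ 0 := by
  intro hn
  have hq := FiniteField.cast_card_eq_zero F
  rw [CharP.cast_eq_zero_iff F (ringChar F)] at hn hq
  exact CharP.ringChar_ne_one (Nat.eq_one_of_dvd_coprimes h hn hq)

theorem fdim2_code_eq_card_sub_one {F : Type} [Field F] {G : Type} [CommGroup G] [Fintype G]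
    {a b e : MonoidAlgebra F G} (he : e ≠ 0)
    (hker : ∀ u, u * a = 0 ∧ u * b = 0 ↔ ∃ c : F, c • e = u) :
    fdim2 F (code a b) = Fintype.card G - 1 := by
  set ψ := ((LinearMap.mulRight (MonoidAlgebra F G) a).prod
    (LinearMap.mulRight (MonoidAlgebra F G) b)).restrictScalars F
  have hψ : LinearMap.ker ψ = F ∙ e := by
    ext u
    rw [LinearMap.mem_ker, Submodule.mem_span_singleton, ← hker]
    exact Prod.ext_iff
  have := ψ.finrank_range_add_finrank_ker
  rw [hψ, finrank_span_singleton he, Module.finrank_eq_card_basis (MonoidAlgebra.basis G F)]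
    at this
  change Module.finrank F (LinearMap.range ψ) = _
  omega

theorem stmt_8_general (F : Type) [Field F] [Fintype F] (G : Type) [CommGroup G] [Fintype G]
    (hcop : Nat.Coprime (Fintype.card G) (Fintype.card F))
    (b : MonoidAlgebra F G)
    (hb0 : eZero F G * b = 0) (hb : b * bar b = -(1 - eZero F G)) :
    IsSelfOrthCode (code (1 - eZero F G) b) ∧
      fdim2 F (code (1 - eZero F G) b) = Fintype.card G - 1 := by
  have hn := natCast_ne_zero_of_coprime_card hcop
  have he₀ := isIdempotentElem_eZero hn
  refine ⟨isSelfOrthCode_code ?_, fdim2_code_eq_card_sub_one (eZero_ne_zero hn) fun u ↦ ?_⟩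
  · rw [bar_sub, bar_one, bar_eZero, he₀.one_sub.eq, hb, add_neg_cancel]
  · rw [he₀.mul_one_sub_eq_zero_and_mul_eq_zero_iff hb0, mul_eZero_eq_self_iff hn]

/-- For `b† ∈ FG` with `e₀·b† = 0` and `b†·(b̄†) = -(1 - e₀)`, the code
`C_{1†,b†}` is a self-orthogonal 2-quasi-`FG` code of `F`-dimension `n - 1`. -/
theorem stmt_8 (F : Type) [Field F] [Fintype F] (G : Type) [CommGroup G] [Fintype G]
    (hn : 1 < Fintype.card G) (hodd : Odd (Fintype.card G))
    (hcop : Nat.Coprime (Fintype.card G) (Fintype.card F))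
    (b : MonoidAlgebra F G)
    (hb0 : eZero F G * b = 0) (hb : b * bar b = -(1 - eZero F G)) :
    IsSelfOrthCode (code (1 - eZero F G) b) ∧
      fdim2 F (code (1 - eZero F G) b) = Fintype.card G - 1 :=
  stmt_8_general F G hcop b hb0 hb
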